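/- Let F be a finite set of reduction operators relative to a well-ordered set (G, <) and suppose F has the Church–Rosser property: for every v ∈ K⟨G⟩ there exist T₁, …, T_r ∈ F with (∧F)(v) = (T_r ∘ ⋯ ∘ T₁)(v). Then F is confluent, i.e., NF(∧F) = ⋂_{T∈F} NF(T). -/

import Mathlib

/-- A reduction operator relative to a well-ordered set `(G, <)`: an idempotent
`K`-linear endomorphism `T` of `G →₀ K` such that `T g ≤ g` for every generator `g`. -/
def IsReductionOperator {K G : Type*} [Field K] [LinearOrder G]
    (T : (G →₀ K) →ₗ[K] (G →₀ K)) : Prop :=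
  T ∘ₗ T = T ∧ ∀ g : G,
    T (Finsupp.single g 1) = Finsupp.single g 1 ∨
      ∀ h ∈ (T (Finsupp.single g 1)).support, h < g

/-!
If `g` is a normal form of `M` and `T ∈ F`, then `g - T g ∈ ker T ⊆ ker M`, so `M (T g) = g`.
Were `T g ≠ g`, the vector `T g` would be supported strictly below `g`; a reduction operator
preserves the span of the generators below `g`, so `M (T g)` would be too, although it is `g`.
Conversely, a common normal form of all `T ∈ F` is fixed by every composite of them, hence by
`M` thanks to the Church–Rosser property.
-/

open Finsupp Set

theorem List.foldl_apply_eq_self_of_forall_mem {F α : Type*} [FunLike F α α] {l : List F} {v : α}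
    (h : ∀ T ∈ l, T v = v) : l.foldl (fun w T => T w) v = v := by
  induction l with
  | nil => rfl
  | cons T l ih =>
    rw [List.foldl_cons, h T List.mem_cons_self]
    exact ih fun S hS => h S (List.mem_cons_of_mem T hS)

namespace IsReductionOperator

variable {K G : Type*} [Field K] [LinearOrder G] {T : (G →₀ K) →ₗ[K] (G →₀ K)}

theorem apply_apply (hT : IsReductionOperator T) (v : G →₀ K) : T (T v) = T v :=
  LinearMap.congr_fun hT.1 v

theorem sub_apply_mem_ker (hT : IsReductionOperator T) (v : G →₀ K) :
    v - T v ∈ LinearMap.ker T := by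
  rw [LinearMap.mem_ker, map_sub, hT.apply_apply, sub_self]

theorem support_apply_single_subset (hT : IsReductionOperator T) (a : G) :
    ↑(T (single a 1)).support ⊆ Iic a := by
  intro h hh
  rcases hT.2 a with hfix | hlt
  · rw [hfix] at hh
    exact (Finset.mem_singleton.1 (support_single_subset hh)).le
  · exact (hlt h hh).le

theorem map_supported_Iio_le (hT : IsReductionOperator T) (g : G) :
    (supported K K (Iio g)).map T ≤ supported K K (Iio g) := by
  nth_rw 1 [supported_eq_span_single]
  rw [Submodule.map_span_le]
  rintro _ ⟨a, ha, rfl⟩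
  exact (hT.support_apply_single_subset a).trans (Iic_subset_Iio.2 ha)

theorem apply_single_eq_of_ker_le {M : (G →₀ K) →ₗ[K] (G →₀ K)} (hT : IsReductionOperator T)
    (hM : IsReductionOperator M) (hker : LinearMap.ker T ≤ LinearMap.ker M) {g : G}
    (hg : M (single g 1) = single g 1) : T (single g 1) = single g 1 := by
  have hMT : M (T (single g 1)) = single g 1 := by
    have := hker (hT.sub_apply_mem_ker (single g 1))
    rwa [LinearMap.mem_ker, map_sub, sub_eq_zero, hg, eq_comm] at this
  refine (hT.2 g).resolve_right fun hlt => ?_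
  have hbelow : M (T (single g 1)) ∈ supported K K (Iio g) :=
    hM.map_supported_Iio_le g (Submodule.mem_map_of_mem hlt)
  rw [hMT] at hbelow
  exact lt_irrefl g (hbelow (by simp))

end IsReductionOperator

theorem stmt_10_general {K G : Type*} [Field K] [LinearOrder G]
    (F : Set ((G →₀ K) →ₗ[K] (G →₀ K)))
    (hro : ∀ T ∈ F, IsReductionOperator T)
    (M : (G →₀ K) →ₗ[K] (G →₀ K)) (hM : IsReductionOperator M)
    (hkerM : LinearMap.ker M = ⨆ T ∈ F, LinearMap.ker T)
    (hCR : ∀ v : G →₀ K, ∃ l : List ((G →₀ K) →ₗ[K] (G →₀ K)),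
      (∀ T ∈ l, T ∈ F) ∧ M v = l.foldl (fun w T => T w) v) :
    {g : G | M (Finsupp.single g 1) = Finsupp.single g 1} =
      ⋂ T ∈ F, {g : G | T (Finsupp.single g 1) = Finsupp.single g 1} := by
  ext g
  simp only [mem_ofPred_eq, mem_iInter]
  constructor
  · intro hg T hT
    have hker : LinearMap.ker T ≤ LinearMap.ker M :=
      hkerM ▸ le_biSup (fun T => LinearMap.ker T) hT
    exact (hro T hT).apply_single_eq_of_ker_le hM hker hg
  · intro hg
    obtain ⟨l, hlF, hfold⟩ := hCR (single g 1)
    rw [hfold]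
    exact List.foldl_apply_eq_self_of_forall_mem fun T hT => hg T (hlF T hT)

/-- A finite set of reduction operators with the Church–Rosser property is confluent. -/
theorem stmt_10 {K G : Type*} [Field K] [LinearOrder G] [WellFoundedLT G]
    (F : Set ((G →₀ K) →ₗ[K] (G →₀ K))) (hfin : F.Finite) (hne : F.Nonempty)
    (hro : ∀ T ∈ F, IsReductionOperator T)
    (M : (G →₀ K) →ₗ[K] (G →₀ K)) (hM : IsReductionOperator M)
    (hkerM : LinearMap.ker M = ⨆ T ∈ F, LinearMap.ker T)
    (hCR : ∀ v : G →₀ K, ∃ l : List ((G →₀ K) →ₗ[K] (G →₀ K)),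
      (∀ T ∈ l, T ∈ F) ∧ M v = l.foldl (fun w T => T w) v) :
    {g : G | M (Finsupp.single g 1) = Finsupp.single g 1} =
      ⋂ T ∈ F, {g : G | T (Finsupp.single g 1) = Finsupp.single g 1} :=
  stmt_10_general F hro M hM hkerM hCR
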